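/- arXiv:1208.2268 — 2 statements merged into one kernel-verified Lean document; each statement's English description precedes it below -/
import Mathlib

section
/- Let D = (V,E,B) be a brick decomposition for a homeomorphism f, and let b ∈ B. The following are equivalent: (1) b ∈ [b]_>; (2) [b]_> = [b]_≥; (3) b ∈ [b]_<; (4) [b]_< = [b]_≤; (5) [b]_< ∩ [b]_≥ ≠ ∅; (6) [b]_≤ ∩ [b]_> ≠ ∅. -/
open Set List

/-- The union in `M` of a set of bricks. -/
def brickUnion {M B : Type*} (br : B → Set M) (X : Set B) : Set M := ⋃ b ∈ X, br b

/-- The map `φ : P(B) → P(B)`, `φ(X) = {b ∈ B : f(X) ∩ b ≠ ∅}`. -/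
def phi {M B : Type*} (f : M → M) (br : B → Set M) (X : Set B) : Set B :=
  {b | (f '' brickUnion br X ∩ br b).Nonempty}

/-- The future `[b]_≥ = ⋃_{k ≥ 0} φ^k({b})`. -/
def future {M B : Type*} (f : M → M) (br : B → Set M) (b : B) : Set B :=
  ⋃ k : ℕ, (phi f br)^[k] {b}

/-- The strict future `[b]_> = ⋃_{k > 0} φ^k({b})`. -/
def strictFuture {M B : Type*} (f : M → M) (br : B → Set M) (b : B) : Set B :=
  ⋃ k : ℕ, ⋃ _ : 0 < k, (phi f br)^[k] {b}

/-- The past `[b]_≤ = ⋃_{k ≥ 0} φ_-^k({b})`. -/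
def past {M B : Type*} [TopologicalSpace M] (f : M ≃ₜ M) (br : B → Set M) (b : B) : Set B :=
  ⋃ k : ℕ, (phi (⇑f.symm) br)^[k] {b}

/-- The strict past `[b]_< = ⋃_{k > 0} φ_-^k({b})`. -/
def strictPast {M B : Type*} [TopologicalSpace M] (f : M ≃ₜ M) (br : B → Set M) (b : B) :
    Set B :=
  ⋃ k : ℕ, ⋃ _ : 0 < k, (phi (⇑f.symm) br)^[k] {b}

section Aux
variable {M B : Type*}

def rel' (f : M → M) (br : B → Set M) (a c : B) : Prop := (f '' br a ∩ br c).Nonempty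

lemma mem_phi_iff (f : M → M) (br : B → Set M) (X : Set B) (c : B) :
    c ∈ phi f br X ↔ ∃ a ∈ X, rel' f br a c := by
  constructor
  · rintro ⟨x, ⟨y, hy, rfl⟩, hx⟩
    simp only [brickUnion, Set.mem_iUnion] at hy
    obtain ⟨a, ha, hya⟩ := hy
    exact ⟨a, ha, f y, ⟨y, hya, rfl⟩, hx⟩
  · rintro ⟨a, ha, x, ⟨y, hy, rfl⟩, hx⟩
    refine ⟨f y, ⟨y, ?_, rfl⟩, hx⟩
    simp only [brickUnion, Set.mem_iUnion]
    exact ⟨a, ha, hy⟩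

lemma mem_phi_iterate (f : M → M) (br : B → Set M) (n : ℕ) (X : Set B) (c : B) :
    c ∈ (phi f br)^[n] X ↔ ∃ a ∈ X, c ∈ (phi f br)^[n] {a} := by
  induction n generalizing c with
  | zero => simp
  | succ n ih =>
    simp only [Function.iterate_succ_apply', mem_phi_iff]
    constructor
    · rintro ⟨m, hm, hmc⟩
      obtain ⟨a, ha, hma⟩ := (ih _).mp hm
      exact ⟨a, ha, m, hma, hmc⟩
    · rintro ⟨a, ha, m, hma, hmc⟩
      exact ⟨m, (ih _).mpr ⟨a, ha, hma⟩, hmc⟩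

lemma rel'_symm [TopologicalSpace M] (f : M ≃ₜ M) (br : B → Set M) (a c : B) :
    rel' (⇑f) br a c ↔ rel' (⇑f.symm) br c a := by
  constructor
  · rintro ⟨x, ⟨y, hy, rfl⟩, hx⟩
    exact ⟨y, ⟨f y, hx, by simp⟩, hy⟩
  · rintro ⟨x, ⟨y, hy, rfl⟩, hx⟩
    exact ⟨y, ⟨f.symm y, hx, by simp⟩, hy⟩

lemma dual_iterate [TopologicalSpace M] (f : M ≃ₜ M) (br : B → Set M) (n : ℕ) (b c : B) :
    c ∈ (phi (⇑f) br)^[n] {b} ↔ b ∈ (phi (⇑f.symm) br)^[n] {c} := by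
  induction n generalizing b c with
  | zero => simp [eq_comm]
  | succ n ih =>
    rw [Function.iterate_succ_apply', Function.iterate_succ_apply]
    rw [mem_phi_iff, mem_phi_iterate]
    constructor
    · rintro ⟨m, hm, hmc⟩
      exact ⟨m, (mem_phi_iff _ _ _ _).mpr ⟨c, rfl, (rel'_symm f br m c).mp hmc⟩, (ih _ _).mp hm⟩
    · rintro ⟨m, hm, hbm⟩
      obtain ⟨a, rfl, hma⟩ := (mem_phi_iff _ _ _ _).mp hm
      exact ⟨m, (ih _ _).mpr hbm, (rel'_symm f br m a).mpr hma⟩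

lemma concat (f : M → M) (br : B → Set M) {k l : ℕ} {a m c : B}
    (h1 : m ∈ (phi f br)^[l] {a}) (h2 : c ∈ (phi f br)^[k] {m}) :
    c ∈ (phi f br)^[k + l] {a} := by
  rw [Function.iterate_add_apply, mem_phi_iterate]
  exact ⟨m, h1, h2⟩

end Aux

/-- The six conditions `b ∈ [b]_>`, `[b]_> = [b]_≥`, `b ∈ [b]_<`, `[b]_< = [b]_≤`,
`[b]_< ∩ [b]_≥ ≠ ∅`, `[b]_≤ ∩ [b]_> ≠ ∅` are equivalent. -/

theorem recurrence_conditions_tfae {M B : Type*} [TopologicalSpace M]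
    (f : M ≃ₜ M) (br : B → Set M) (b : B) :
    [ b ∈ strictFuture (⇑f) br b,
      strictFuture (⇑f) br b = future (⇑f) br b,
      b ∈ strictPast f br b,
      strictPast f br b = past f br b,
      (strictPast f br b ∩ future (⇑f) br b).Nonempty,
      (past f br b ∩ strictFuture (⇑f) br b).Nonempty ].TFAE := by
  have hdual : ∀ (n : ℕ) (b' c : B),
      c ∈ (phi (⇑f.symm) br)^[n] {b'} ↔ b' ∈ (phi (⇑f) br)^[n] {c} := by
    intro n b' c
    simpa using dual_iterate f.symm br n b' c
  have hsf : ∀ c, c ∈ strictFuture (⇑f) br b ↔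
      ∃ k, 0 < k ∧ c ∈ (phi (⇑f) br)^[k] {b} := by
    intro c; simp [strictFuture]
  have hf : ∀ c, c ∈ future (⇑f) br b ↔ ∃ k, c ∈ (phi (⇑f) br)^[k] {b} := by
    intro c; simp [future]
  have hsp : ∀ c, c ∈ strictPast f br b ↔
      ∃ k, 0 < k ∧ b ∈ (phi (⇑f) br)^[k] {c} := by
    intro c; simp [strictPast, hdual]
  have hp : ∀ c, c ∈ past f br b ↔ ∃ k, b ∈ (phi (⇑f) br)^[k] {c} := by
    intro c; simp [past, hdual]
  tfae_have 1 ↔ 3 := by rw [hsf b, hsp b]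
  tfae_have 1 → 2 := by
    intro h1
    ext c
    rw [hsf c, hf c]
    constructor
    · rintro ⟨k, _, hk⟩; exact ⟨k, hk⟩
    · rintro ⟨k, hk⟩
      rcases Nat.eq_zero_or_pos k with rfl | hpos
      · simp only [Function.iterate_zero_apply, Set.mem_singleton_iff] at hk
        subst hk
        exact (hsf c).mp h1
      · exact ⟨k, hpos, hk⟩
  tfae_have 2 → 1 := by
    intro h2
    rw [h2, hf]
    exact ⟨0, by simp⟩
  tfae_have 3 → 4 := by
    intro h3
    ext c
    rw [hsp c, hp c]
    constructor
    · rintro ⟨k, _, hk⟩; exact ⟨k, hk⟩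
    · rintro ⟨k, hk⟩
      rcases Nat.eq_zero_or_pos k with rfl | hpos
      · simp only [Function.iterate_zero_apply, Set.mem_singleton_iff] at hk
        subst hk
        exact (hsp b).mp h3
      · exact ⟨k, hpos, hk⟩
  tfae_have 4 → 3 := by
    intro h4
    rw [h4, hp]
    exact ⟨0, by simp⟩
  tfae_have 1 → 5 := by
    intro h1
    refine ⟨b, ?_, (hf b).mpr ⟨0, by simp⟩⟩
    exact (hsp b).mpr ((hsf b).mp h1)
  tfae_have 5 → 1 := by
    rintro ⟨c, hcp, hcf⟩
    obtain ⟨k, hk, hbk⟩ := (hsp c).mp hcp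
    obtain ⟨l, hcl⟩ := (hf c).mp hcf
    exact (hsf b).mpr ⟨k + l, by omega, concat _ br hcl hbk⟩
  tfae_have 1 → 6 := by
    intro h1
    exact ⟨b, (hp b).mpr ⟨0, by simp⟩, h1⟩
  tfae_have 6 → 1 := by
    rintro ⟨c, hcp, hcf⟩
    obtain ⟨l, hbl⟩ := (hp c).mp hcp
    obtain ⟨k, hk, hck⟩ := (hsf c).mp hcf
    exact (hsf b).mpr ⟨l + k, by omega, concat _ br hck hbl⟩
  tfae_finish
end

section
/- Let n ≥ 3 and let L = ((α_i, ω_i))_{i ∈ Z/nZ} be a cycle of links on the circle S¹ (for each i, α_i ≠ ω_i, and α_{i+1}, ω_{i+1} lie in different connected components of S¹ \ {α_i, ω_i}). If L is elliptic and n = 3, then the six points α_0, ω_0, α_1, ω_1, α_2, ω_2 are pairwise distinct. -/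
open Set

/-- `x` and `y` lie in different connected components of `S¹ \ {a, b}`. -/
def SepPair {C : Type*} [CircularOrder C] (a b x y : C) : Prop :=
  (SBtw.sbtw a x b ∧ SBtw.sbtw b y a) ∨ (SBtw.sbtw b x a ∧ SBtw.sbtw a y b)

/-- `b` immediately follows `a` in the positive cyclic order restricted to `ℓ` (`a → b`). -/
def CycSucc {C : Type*} [CircularOrder C] (ℓ : Set C) (a b : C) : Prop :=
  a ∈ ℓ ∧ b ∈ ℓ ∧ a ≠ b ∧ ∀ c ∈ ℓ, ¬ SBtw.sbtw a c b

/-- `a ⇒ b` : equality or immediate succession. -/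
def CycSuccEq {C : Type*} [CircularOrder C] (ℓ : Set C) (a b : C) : Prop :=
  a = b ∨ CycSucc ℓ a b

/-- The set `ℓ` of points of a family of pairs. -/
def linkSet {C : Type*} {n : ℕ} (a w : ZMod n → C) : Set C := Set.range a ∪ Set.range w

/-- `((α_i, ω_i))` is a cycle of links: `α_i ≠ ω_i` and `α_{i+1}, ω_{i+1}` lie in
different components of `S¹ \ {α_i, ω_i}`. -/
def IsCycleOfLinks {C : Type*} [CircularOrder C] {n : ℕ} (a w : ZMod n → C) : Prop :=
  (∀ i, a i ≠ w i) ∧ ∀ i, SepPair (a i) (w i) (a (i + 1)) (w (i + 1))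

/-- The cycle is elliptic: `ω_{i-1} ⇒ α_{i+1} → ω_i` for all `i`. -/
def IsElliptic {C : Type*} [CircularOrder C] {n : ℕ} (a w : ZMod n → C) : Prop :=
  ∀ i, CycSuccEq (linkSet a w) (w (i - 1)) (a (i + 1)) ∧
    CycSucc (linkSet a w) (a (i + 1)) (w i)

/-- An elliptic cycle of links of order 3 on the circle `S¹ = ℝ/2πℤ` has its six points
pairwise distinct. -/
theorem elliptic_order_three_points_distinct [Fact (0 < 2 * Real.pi)]
    (a w : ZMod 3 → AddCircle (2 * Real.pi))
    (hcycle : IsCycleOfLinks a w) (hell : IsElliptic a w) :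
    Function.Injective a ∧ Function.Injective w ∧ ∀ i j, a i ≠ w j := by
  have sep : ∀ p q x y : AddCircle (2 * Real.pi), SepPair p q x y →
      x ≠ p ∧ x ≠ q ∧ y ≠ p ∧ y ≠ q := by
    rintro p q x y (⟨h1, h2⟩ | ⟨h1, h2⟩) <;>
    refine ⟨?_, ?_, ?_, ?_⟩ <;> rintro rfl <;>
    first
      | exact sbtw_irrefl_left h1 | exact sbtw_irrefl_right h1
      | exact sbtw_irrefl_left h2 | exact sbtw_irrefl_right h2
  have key : ∀ i, a (i + 1) ≠ a i ∧ a (i + 1) ≠ w i ∧ w (i + 1) ≠ a i ∧ w (i + 1) ≠ w i :=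
    fun i => sep _ _ _ _ (hcycle.2 i)
  have htri : ∀ i j : ZMod 3, i = j ∨ j = i + 1 ∨ i = j + 1 := by decide
  refine ⟨?_, ?_, ?_⟩
  · intro i j h
    rcases htri i j with rfl | rfl | rfl
    · rfl
    · exact absurd h.symm (key i).1
    · exact absurd h (key j).1
  · intro i j h
    rcases htri i j with rfl | rfl | rfl
    · rfl
    · exact absurd h.symm (key i).2.2.2
    · exact absurd h (key j).2.2.2
  · intro i j
    rcases htri i j with rfl | rfl | rfl
    · exact hcycle.1 i
    · exact fun h => (key i).2.2.1 h.symm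
    · exact (key j).2.1
end
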